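/- Let F(z) = (πR²)^{−1} χ_R(z) on ℝ², where χ_R is the indicator function of the disc {|z| ≤ R}. Then Cov(F) = (R²/4)·I₂, so F satisfies the Robertson–Schrödinger uncertainty principle Cov(F) + (iħ/2)J ≥ 0 if and only if R ≥ √(2ħ), and saturates it (λ_{σ,1}(Cov(F)) = ħ/2) if and only if R = √(2ħ); yet for no R > 0 is F the Wigner distribution of a density matrix on L²(ℝ), since Wigner distributions are continuous and cannot be compactly supported. -/

import Mathlib

open MeasureTheory Matrix Complex Real
open scoped BigOperators ComplexConjugate ComplexOrder

noncomputable section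

namespace RSUP

/-- Phase space `ℝ^{2n}`. -/
abbrev PS (n : ℕ) := Fin (2*n) → ℝ

/-- Configuration space `ℝⁿ`. -/
abbrev CS (n : ℕ) := Fin n → ℝ

/-- The standard symplectic matrix `J = [[0, I],[−I, 0]]`. -/
def J (n : ℕ) : Matrix (Fin (2*n)) (Fin (2*n)) ℝ :=
  Matrix.of fun i j =>
    if (i : ℕ) + n = (j : ℕ) then 1 else if (j : ℕ) + n = (i : ℕ) then -1 else 0

/-- `J` as a complex matrix. -/
def Jc (n : ℕ) : Matrix (Fin (2*n)) (Fin (2*n)) ℂ := (J n).map (fun x => (x : ℂ))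

/-- The standard symplectic form `σ(z,w) = z ⬝ Jᵀ w = p·x' − x·p'`. -/
def symplForm (n : ℕ) (z w : PS n) : ℝ := z ⬝ᵥ ((J n)ᵀ *ᵥ w)

/-- The symplectic Fourier transform `(𝓕_σ F)(ζ) = (2πhb)^{−n} ∫ F(z) e^{−(i/hb)σ(ζ,z)} dz`. -/
def symplFT (n : ℕ) (hb : ℝ) (F : PS n → ℂ) : PS n → ℂ := fun ζ =>
  ((2 * π * hb) ^ n)⁻¹ • ∫ z : PS n, F z * Complex.exp (-(Complex.I / (hb:ℂ)) * ((symplForm n ζ z : ℝ) : ℂ))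

/-- The hb-scaled Fourier transform on phase space,
`(𝓕_hb F)(ζ) = (2πhb)^{−n} ∫ F(z) e^{−(i/hb) z·ζ} dz`. -/
def hbarFT (n : ℕ) (hb : ℝ) (F : PS n → ℂ) : PS n → ℂ := fun ζ =>
  ((2 * π * hb) ^ n)⁻¹ • ∫ z : PS n, F z * Complex.exp (-(Complex.I / (hb:ℂ)) * (((∑ i, z i * ζ i) : ℝ) : ℂ))

/-- The Plancherel–Fourier transform on `ℝ^d`. -/
def FT {d : ℕ} (F : (Fin d → ℝ) → ℂ) : (Fin d → ℝ) → ℂ := fun ω =>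
  ∫ x : Fin d → ℝ, F x * Complex.exp (-(2 * π * Complex.I) * (((∑ i, x i * ω i) : ℝ) : ℂ))

/-- Membership in the modulation space `M¹₂(ℝ^d)`:
`F ∈ L²` and `∫ (1+|z|²)(|F(z)|² + |𝓕F(z)|²) dz < ∞`. -/
def InM12 {d : ℕ} (F : (Fin d → ℝ) → ℂ) : Prop :=
  MemLp F 2 (volume : Measure (Fin d → ℝ)) ∧
  Integrable (fun z : Fin d → ℝ => (1 + ∑ i, z i ^ 2) * (‖F z‖ ^ 2 + ‖FT F z‖ ^ 2)) volume

/-- The mean vector `⟨z⟩_F = ∫ z F(z) dz / ∫ F(z) dz`. -/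
def meanVec {d : ℕ} (F : (Fin d → ℝ) → ℝ) : Fin d → ℝ := fun i =>
  (∫ z : Fin d → ℝ, z i * F z) / (∫ z : Fin d → ℝ, F z)

/-- The covariance matrix `Cov(F) = ∫ (z−⟨z⟩)(z−⟨z⟩)ᵀ F(z) dz / ∫ F(z) dz`. -/
def Cov {d : ℕ} (F : (Fin d → ℝ) → ℝ) : Matrix (Fin d) (Fin d) ℝ :=
  Matrix.of fun i j =>
    (∫ z : Fin d → ℝ, (z i - meanVec F i) * (z j - meanVec F j) * F z) / (∫ z : Fin d → ℝ, F z)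

/-- Finiteness of the covariance matrix of `F` (integrability of all second moments). -/
def HasFiniteCov {d : ℕ} (F : (Fin d → ℝ) → ℝ) : Prop :=
  Integrable F (volume : Measure (Fin d → ℝ)) ∧
  (∀ i, Integrable (fun z : Fin d → ℝ => z i * F z) volume) ∧
  (∀ i j, Integrable (fun z : Fin d → ℝ => z i * z j * F z) volume)

/-- The purity `𝒫[F] = (2πhb)ⁿ ∫ F(z)² dz`. -/
def purity (n : ℕ) (hb : ℝ) (F : PS n → ℝ) : ℝ := (2 * π * hb) ^ n * ∫ z : PS n, F z ^ 2

/-- `|F̃|²`, the probability density obtained by `L²`-normalizing `F` and squaring. -/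
def normSq2 {d : ℕ} (F : (Fin d → ℝ) → ℝ) : (Fin d → ℝ) → ℝ := fun z =>
  F z ^ 2 / ∫ w : Fin d → ℝ, F w ^ 2

/-- `|𝓕_σ F̃|²`, where `F̃ = F/‖F‖_{L²}`. -/
def nFTsq (n : ℕ) (hb : ℝ) (F : PS n → ℝ) : PS n → ℝ := fun z =>
  ‖symplFT n hb (fun w => (F w : ℂ)) z‖ ^ 2 / ∫ w : PS n, F w ^ 2

/-- `|𝓕_hb F̃|²`, where `F̃ = F/‖F‖_{L²}`. -/
def nhFTsq (n : ℕ) (hb : ℝ) (F : PS n → ℝ) : PS n → ℝ := fun z =>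
  ‖hbarFT n hb (fun w => (F w : ℂ)) z‖ ^ 2 / ∫ w : PS n, F w ^ 2

/-- The Hermitian matrix `A + (ihb/2) J` on `ℂ^{2n}`. -/
def RSmat (n : ℕ) (hb : ℝ) (A : Matrix (Fin (2*n)) (Fin (2*n)) ℝ) :
    Matrix (Fin (2*n)) (Fin (2*n)) ℂ :=
  A.map (fun x => (x : ℂ)) + (hb / 2) • Complex.I • Jc n

/-- The right-hand side of the refined Robertson–Schrödinger uncertainty principle,
`𝒫[F] ( Cov(|F̃|²) + ¼ Cov(|𝓕_σF̃|²) + (ihb/2)J )`. -/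
def refinedMat (n : ℕ) (hb : ℝ) (F : PS n → ℝ) : Matrix (Fin (2*n)) (Fin (2*n)) ℂ :=
  purity n hb F • RSmat n hb (Cov (normSq2 F) + (4 : ℝ)⁻¹ • Cov (nFTsq n hb F))

/-- The refined Robertson–Schrödinger uncertainty principle for `F`:
`Cov(F) + (ihb/2)J ≥ 𝒫[F](Cov(|F̃|²) + ¼ Cov(|𝓕_σF̃|²) + (ihb/2)J) ≥ 0`. -/
def SatisfiesRefinedRSUP (n : ℕ) (hb : ℝ) (F : PS n → ℝ) : Prop :=
  (RSmat n hb (Cov F) - refinedMat n hb F).PosSemidef ∧ (refinedMat n hb F).PosSemidef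

/-- The position part of a phase space point. -/
def xpart {n : ℕ} (z : PS n) : CS n := fun i => z ⟨i.val, by have := i.isLt; omega⟩

/-- The momentum part of a phase space point. -/
def ppart {n : ℕ} (z : PS n) : CS n := fun i => z ⟨n + i.val, by have := i.isLt; omega⟩

/-- The Wigner transform of a pure state `f`:
`Wf(x,p) = (2πhb)^{−n} ∫ f(x+y/2) conj(f(x−y/2)) e^{−(i/hb)p·y} dy`. -/
def Wig (n : ℕ) (hb : ℝ) (f : CS n → ℂ) : PS n → ℂ := fun z =>
  ((2 * π * hb) ^ n)⁻¹ • ∫ y : CS n,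
    f (xpart z + (2 : ℝ)⁻¹ • y) * (starRingEnd ℂ) (f (xpart z - (2 : ℝ)⁻¹ • y)) *
      Complex.exp (-(Complex.I / (hb:ℂ)) * (((∑ i, ppart z i * y i) : ℝ) : ℂ))

/-- A density matrix (positive self-adjoint trace-class operator on `L²(ℝⁿ)` of unit trace),
presented through its spectral decomposition `ρ̂ = Σ_k p_k |f_k⟩⟨f_k|` with `p_k ≥ 0`,
`Σ_k p_k = 1` and `(f_k)` orthonormal in `L²(ℝⁿ)`. -/
structure DensityOp (n : ℕ) where
  p : ℕ → ℝ
  f : ℕ → CS n → ℂ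
  p_nonneg : ∀ k, 0 ≤ p k
  p_sum : HasSum p 1
  f_L2 : ∀ k, MemLp (f k) 2 (volume : Measure (CS n))
  f_ortho : ∀ k l, ∫ x : CS n, (starRingEnd ℂ) (f k x) * f l x = if k = l then 1 else 0

/-- The Wigner distribution of a density matrix, `Wρ = Σ_k p_k W f_k`. -/
def WigMix (n : ℕ) (hb : ℝ) (ρ : DensityOp n) : PS n → ℂ := fun z =>
  ∑' k, (ρ.p k : ℂ) * Wig n hb (ρ.f k) z

/-- The state is pure, i.e. `ρ̂` is a rank-one orthogonal projection. -/
def DensityOp.IsPure {n : ℕ} (ρ : DensityOp n) : Prop := ∃ k, ρ.p k = 1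

/-- `W` is the Wigner distribution of the density matrix `ρ`, is real,
belongs to the modulation space `M¹₂(ℝ^{2n})` and has finite covariance matrix. -/
def IsWignerOf (n : ℕ) (hb : ℝ) (ρ : DensityOp n) (W : PS n → ℝ) : Prop :=
  (∀ z, WigMix n hb ρ z = (W z : ℂ)) ∧ InM12 (fun z => (W z : ℂ)) ∧ HasFiniteCov W

/-- The Boltzmann entropy `E(μ) = −∫ μ log μ`. -/
def entropy {d : ℕ} (μ : (Fin d → ℝ) → ℝ) : ℝ := -∫ z : Fin d → ℝ, μ z * Real.log (μ z)

/-- The Gaussian pure-state Wigner function with covariance matrix `B` centered at `z₀`. -/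
def gaussW (n : ℕ) (hb : ℝ) (B : Matrix (Fin (2*n)) (Fin (2*n)) ℝ) (z₀ : PS n) : PS n → ℝ :=
  fun z => ((π * hb) ^ n)⁻¹ * Real.exp (-(2:ℝ)⁻¹ * ((z - z₀) ⬝ᵥ (B⁻¹ *ᵥ (z - z₀))))

/-- `S ∈ Sp(n)`: `S` is a symplectic matrix. -/
def IsSymplectic (n : ℕ) (S : Matrix (Fin (2*n)) (Fin (2*n)) ℝ) : Prop :=
  Sᵀ * J n * S = J n

/-- The smallest symplectic eigenvalue of `B`: the smallest modulus of an eigenvalue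
of `B J⁻¹`. -/
def minSymplEig (n : ℕ) (B : Matrix (Fin (2*n)) (Fin (2*n)) ℝ) : ℝ :=
  sInf ((fun w : ℂ => ‖w‖) '' spectrum ℂ ((B * (J n)⁻¹).map (fun x => (x : ℂ))))

end RSUP

open RSUP MeasureTheory Matrix

/-!
In polar coordinates the disc has vanishing first and mixed second moments and
`∫ x² = ∫ p² = πR⁴/4`, so `Cov F = (R²/4) I`. For a multiple `a I` of the identity,
`a I + (iħ/2) J = (a - ħ/2) I + (ħ/2) v v*` with `v = (1, -i)` and `v* (1, i) = 0`, so it is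
positive semidefinite iff `a ≥ ħ/2`; and `(a I) J⁻¹` has eigenvalues `±ia`, so `λ_{σ,1}(a I) = |a|`.

On each momentum line `{x = x₀}` the Wigner transform of `f ∈ L²` is the Fourier transform of
the integrable function `y ↦ f(x₀ + y/2) conj f(x₀ - y/2)`, hence continuous and bounded by
`(πħ)⁻¹ ‖f‖²`. The Wigner distribution of a density matrix is then a uniformly convergent series
of continuous functions on that line, whereas `F` jumps on the circle `|z| = R`.
-/

open scoped Topology

namespace RSUP

lemma cov_eq_smul_one_of_moments {d : ℕ} {F : (Fin d → ℝ) → ℝ} {c : ℝ}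
    (h0 : ∫ z, F z = 1) (h1 : ∀ i, ∫ z, z i * F z = 0)
    (h2 : ∀ i j, ∫ z, z i * z j * F z = if i = j then c else 0) :
    Cov F = c • 1 := by
  have hmean : meanVec F = 0 := funext fun i => by simp [meanVec, h0, h1]
  ext i j
  simp [Cov, hmean, h0, h2, Matrix.one_apply]

section Disc

def discIndicator (R : ℝ) (z : Fin 2 → ℝ) : ℝ := if ∑ i, z i ^ 2 ≤ R ^ 2 then 1 else 0

variable {R : ℝ}

lemma integral_mul_discIndicator (hR : 0 ≤ R) (Q : (Fin 2 → ℝ) → ℝ) (g h : ℝ → ℝ)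
    (hQ : ∀ r θ, 0 < r → r * Q ![r * Real.cos θ, r * Real.sin θ] = g r * h θ) :
    ∫ z, Q z * discIndicator R z = (∫ r in 0..R, g r) * ∫ θ in -π..π, h θ := by
  rw [← (volume_preserving_finTwoArrow ℝ).symm.integral_comp', ← integral_comp_polarCoord_symm,
    polarCoord_target]
  have hpolar : Set.EqOn
      (fun p : ℝ × ℝ => p.1 • (Q ((MeasurableEquiv.finTwoArrow).symm (polarCoord.symm p)) *
        discIndicator R ((MeasurableEquiv.finTwoArrow).symm (polarCoord.symm p))))
      (fun p => (Set.Iic R).indicator g p.1 * h p.2) (Set.Ioi 0 ×ˢ Set.Ioo (-π) π) := by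
    rintro ⟨r, θ⟩ ⟨hr, -⟩
    have hr : 0 < r := hr
    have hpt : MeasurableEquiv.finTwoArrow.symm (polarCoord.symm (r, θ)) =
        ![r * Real.cos θ, r * Real.sin θ] := rfl
    have hnorm : ∑ i, ![r * Real.cos θ, r * Real.sin θ] i ^ 2 = r ^ 2 := by
      simp only [Fin.sum_univ_two, Matrix.cons_val_zero, Matrix.cons_val_one]
      linear_combination r ^ 2 * Real.cos_sq_add_sin_sq θ
    have hdisc : r ^ 2 ≤ R ^ 2 ↔ r ∈ Set.Iic R := pow_le_pow_iff_left₀ hr.le hR two_ne_zero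
    simp only [hpt, discIndicator, hnorm, smul_eq_mul, Set.indicator, hdisc]
    split_ifs
    · rw [mul_one, hQ r θ hr]
    · ring
  rw [setIntegral_congr_fun (measurableSet_Ioi.prod measurableSet_Ioo) hpolar,
    Measure.volume_eq_prod, setIntegral_prod_mul, setIntegral_indicator measurableSet_Iic,
    Set.Ioi_inter_Iic, ← integral_Ioc_eq_integral_Ioo, ← intervalIntegral.integral_of_le hR,
    ← intervalIntegral.integral_of_le (by linarith [Real.pi_pos])]

lemma integral_unitCircle_coord (i : Fin 2) :
    ∫ θ in -π..π, ![Real.cos θ, Real.sin θ] i = 0 := by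
  fin_cases i <;> simp [integral_cos, integral_sin]

lemma integral_unitCircle_coord_mul_coord (i j : Fin 2) :
    ∫ θ in -π..π, ![Real.cos θ, Real.sin θ] i * ![Real.cos θ, Real.sin θ] j =
      if i = j then π else 0 := by
  fin_cases i <;> fin_cases j <;>
    simp [← sq, integral_cos_sq, integral_sin_sq, integral_sin_mul_cos₁, mul_comm (Real.cos _)]

lemma integral_discIndicator (hR : 0 ≤ R) : ∫ z, discIndicator R z = π * R ^ 2 := by
  have h := integral_mul_discIndicator hR (fun _ => 1) id (fun _ => 1) fun r θ _ => rfl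
  simp only [one_mul, id, intervalIntegral.integral_const, integral_id] at h
  rw [h]
  simp only [ne_eq, OfNat.ofNat_ne_zero, not_false_eq_true, zero_pow, sub_zero, sub_neg_eq_add,
    smul_eq_mul, mul_one]
  ring

lemma integral_coord_mul_discIndicator (hR : 0 ≤ R) (i : Fin 2) :
    ∫ z, z i * discIndicator R z = 0 := by
  rw [integral_mul_discIndicator hR (fun z => z i) (fun r => r ^ 2)
    (fun θ => ![Real.cos θ, Real.sin θ] i) fun r θ _ => ?_, integral_unitCircle_coord, mul_zero]
  fin_cases i <;>
    simp only [Fin.isValue, Fin.zero_eta, Fin.mk_one, cons_val_zero, cons_val_one,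
      cons_val_fin_one] <;> ring

lemma integral_coord_mul_coord_mul_discIndicator (hR : 0 ≤ R) (i j : Fin 2) :
    ∫ z, z i * z j * discIndicator R z = if i = j then π * R ^ 4 / 4 else 0 := by
  rw [integral_mul_discIndicator hR (fun z => z i * z j) (fun r => r ^ 3)
    (fun θ => ![Real.cos θ, Real.sin θ] i * ![Real.cos θ, Real.sin θ] j) fun r θ _ => ?_,
    integral_unitCircle_coord_mul_coord, integral_pow]
  · split_ifs <;> ring
  · fin_cases i <;> fin_cases j <;>
      simp only [Fin.isValue, Fin.zero_eta, Fin.mk_one, cons_val_zero, cons_val_one,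
        cons_val_fin_one] <;> ring

lemma cov_normalized_discIndicator (hR : 0 < R) :
    Cov (fun z => (π * R ^ 2)⁻¹ * discIndicator R z) = (R ^ 2 / 4) • 1 := by
  have hR2 : π * R ^ 2 ≠ 0 := by positivity
  refine cov_eq_smul_one_of_moments ?_ (fun i => ?_) (fun i j => ?_)
  · rw [integral_const_mul, integral_discIndicator hR.le, inv_mul_cancel₀ hR2]
  · simp_rw [mul_left_comm _ (π * R ^ 2)⁻¹]
    rw [integral_const_mul, integral_coord_mul_discIndicator hR.le, mul_zero]
  · simp_rw [mul_left_comm _ (π * R ^ 2)⁻¹]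
    rw [integral_const_mul, integral_coord_mul_coord_mul_discIndicator hR.le]
    split_ifs
    · field_simp
    · rw [mul_zero]

lemma not_continuous_mul_indicator_sq_le {c : ℝ} (hc : c ≠ 0) (hR : 0 ≤ R) :
    ¬ Continuous fun t : ℝ => c * if t ^ 2 ≤ R ^ 2 then 1 else 0 := by
  intro h
  have hout : ∀ᶠ t in 𝓝[>] R, (c * if t ^ 2 ≤ R ^ 2 then 1 else 0) = 0 :=
    eventually_nhdsWithin_of_forall fun t (ht : R < t) => by
      rw [if_neg (by nlinarith), mul_zero]
  have hR0 := tendsto_nhds_unique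
    (((h.tendsto R).mono_left nhdsWithin_le_nhds).congr' hout) tendsto_const_nhds
  simp [hc] at hR0

end Disc

section Symplectic

lemma RSmat_smul_one_eq (hb a : ℝ) :
    RSmat 1 hb (a • 1) = (a - hb / 2) • (1 : Matrix (Fin 2) (Fin 2) ℂ) +
      (hb / 2) • vecMulVec ![1, -Complex.I] (star ![1, -Complex.I]) := by
  ext i j
  fin_cases i <;> fin_cases j <;> simp [RSmat, Jc, J, vecMulVec]

lemma posSemidef_RSmat_smul_one_iff {hb : ℝ} (hhb : 0 ≤ hb) (a : ℝ) :
    (RSmat 1 hb (a • 1)).PosSemidef ↔ hb / 2 ≤ a := by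
  rw [RSmat_smul_one_eq]
  constructor
  · intro h
    have hw := h.dotProduct_mulVec_nonneg ![1, Complex.I]
    have hval : star ![1, Complex.I] ⬝ᵥ ((a - hb / 2) • (1 : Matrix (Fin 2) (Fin 2) ℂ) +
        (hb / 2) • vecMulVec ![1, -Complex.I] (star ![1, -Complex.I])) *ᵥ ![1, Complex.I] =
        ((2 * (a - hb / 2) : ℝ) : ℂ) := by
      simp only [dotProduct, Pi.star_apply, RCLike.star_def, mulVec, vecMulVec, smul_of,
        Matrix.add_apply, Matrix.smul_apply, real_smul, ofReal_sub, ofReal_div, ofReal_ofNat,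
        of_apply, Pi.smul_apply, Fin.sum_univ_two, Fin.isValue, cons_val_zero, map_one, mul_one,
        cons_val_one, cons_val_fin_one, map_neg, conj_I, neg_neg, one_apply_eq, ne_eq, zero_ne_one,
        not_false_eq_true, one_apply_ne, mul_zero, one_mul, zero_add, one_ne_zero, mul_neg,
        neg_mul, I_mul_I, ofReal_mul]
      linear_combination ((hb : ℂ) - a) * Complex.I_sq
    rw [hval, Complex.zero_le_real] at hw
    linarith
  · intro h
    exact (PosSemidef.one.smul (sub_nonneg.2 h)).add
      ((posSemidef_vecMulVec_self_star _).smul (by positivity))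

lemma J_one_inv : (J 1)⁻¹ = -J 1 := by
  refine Matrix.inv_eq_right_inv ?_
  ext i j
  fin_cases i <;> fin_cases j <;> simp [J, Matrix.mul_apply, Fin.sum_univ_two]

lemma spectrum_skew_fin_two (a : ℂ) :
    spectrum ℂ !![0, -a; a, 0] = {Complex.I * a, -(Complex.I * a)} := by
  ext μ
  rw [mem_spectrum_iff_isRoot_charpoly, charpoly_fin_two, trace_fin_two_of, det_fin_two_of]
  simp only [Polynomial.IsRoot.def, Polynomial.eval_add, Polynomial.eval_sub, Polynomial.eval_mul,
    Polynomial.eval_pow, Polynomial.eval_C, Polynomial.eval_X, Set.mem_insert_iff,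
    Set.mem_singleton_iff]
  rw [show μ ^ 2 - (0 + 0) * μ + (0 * 0 - -a * a) = (μ - Complex.I * a) * (μ + Complex.I * a) by
    linear_combination a ^ 2 * Complex.I_sq, mul_eq_zero, sub_eq_zero, add_eq_zero_iff_eq_neg]

lemma minSymplEig_smul_one (a : ℝ) : minSymplEig 1 (a • 1) = |a| := by
  have hmat : ((a • 1 : Matrix (Fin (2 * 1)) (Fin (2 * 1)) ℝ) * (J 1)⁻¹).map (fun x => (x : ℂ)) =
      !![0, -(a : ℂ); (a : ℂ), 0] := by
    rw [J_one_inv]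
    ext i j
    fin_cases i <;> fin_cases j <;> simp [J]
  rw [minSymplEig, hmat, spectrum_skew_fin_two, Set.image_pair, norm_neg, Set.pair_eq_singleton,
    csInf_singleton]
  simp

end Symplectic

section Wigner

variable {n : ℕ} {f : CS n → ℂ}

def phasePoint (x p : CS n) : PS n := Fin.append x p ∘ Fin.cast (two_mul n)

@[simp]
lemma xpart_phasePoint (x p : CS n) : xpart (phasePoint x p) = x :=
  funext (Fin.append_left x p)

@[simp]
lemma ppart_phasePoint (x p : CS n) : ppart (phasePoint x p) = p :=
  funext (Fin.append_right x p)

lemma sum_sq_phasePoint (x p : CS n) :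
    ∑ i, phasePoint x p i ^ 2 = ∑ i, x i ^ 2 + ∑ i, p i ^ 2 := by
  rw [phasePoint, ← (finCongr (two_mul n)).symm.sum_comp, Fin.sum_univ_add]
  simp only [Function.comp_apply, finCongr_symm, finCongr_apply, Fin.cast_cast, Fin.cast_eq_self,
    Fin.append_left, Fin.append_right]

lemma quasiMeasurePreserving_add_smul (x : CS n) {c : ℝ} (hc : c ≠ 0) :
    Measure.QuasiMeasurePreserving (fun y : CS n => x + c • y) volume volume :=
  (measurePreserving_add_left volume x).quasiMeasurePreserving.comp
    (Measure.quasiMeasurePreserving_smul volume hc)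

lemma integral_comp_add_smul (g : CS n → ℝ) (x : CS n) (c : ℝ) :
    ∫ y, g (x + c • y) = |(c ^ n)⁻¹| * ∫ y, g y := by
  rw [Measure.integral_comp_smul volume (fun y => g (x + y)), integral_add_left_eq_self]
  simp

lemma norm_exp_neg_I_div_mul (hb r : ℝ) :
    ‖Complex.exp (-(Complex.I / hb) * r)‖ = 1 := by
  rw [show -(Complex.I / hb) * r = ((-r / hb : ℝ) : ℂ) * Complex.I by push_cast; ring,
    Complex.norm_exp_ofReal_mul_I]

lemma norm_mul_conj_le (a b : ℂ) : ‖a * (starRingEnd ℂ) b‖ ≤ (‖a‖ ^ 2 + ‖b‖ ^ 2) / 2 := by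
  rw [norm_mul, Complex.norm_conj]
  nlinarith [sq_nonneg (‖a‖ - ‖b‖)]

def wigIntegrand (hb : ℝ) (f : CS n → ℂ) (x p y : CS n) : ℂ :=
  f (x + (2 : ℝ)⁻¹ • y) * (starRingEnd ℂ) (f (x - (2 : ℝ)⁻¹ • y)) *
    Complex.exp (-(Complex.I / hb) * ((∑ i, p i * y i : ℝ) : ℂ))

lemma wig_phasePoint (hb : ℝ) (f : CS n → ℂ) (x p : CS n) :
    Wig n hb f (phasePoint x p) = ((2 * π * hb) ^ n)⁻¹ • ∫ y, wigIntegrand hb f x p y := by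
  simp only [Wig, xpart_phasePoint, ppart_phasePoint, wigIntegrand]

def wigMajorant (f : CS n → ℂ) (x y : CS n) : ℝ :=
  (‖f (x + (2 : ℝ)⁻¹ • y)‖ ^ 2 + ‖f (x - (2 : ℝ)⁻¹ • y)‖ ^ 2) / 2

lemma norm_wigIntegrand_le (hb : ℝ) (f : CS n → ℂ) (x p y : CS n) :
    ‖wigIntegrand hb f x p y‖ ≤ wigMajorant f x y := by
  rw [wigIntegrand, norm_mul, norm_exp_neg_I_div_mul, mul_one]
  exact norm_mul_conj_le _ _

lemma integrable_wigMajorant (hf : MemLp f 2 volume) (x : CS n) :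
    Integrable (wigMajorant f x) := by
  have hg := (memLp_two_iff_integrable_sq_norm hf.1).mp hf
  unfold wigMajorant
  simp only [sub_eq_add_neg, ← neg_smul]
  exact (((hg.comp_add_left x).comp_smul (by norm_num)).add
    ((hg.comp_add_left x).comp_smul (by norm_num))).div_const 2

lemma integral_wigMajorant (hf : MemLp f 2 volume) (x : CS n) :
    ∫ y, wigMajorant f x y = 2 ^ n * ∫ z, ‖f z‖ ^ 2 := by
  have hg := (memLp_two_iff_integrable_sq_norm hf.1).mp hf
  simp only [wigMajorant, sub_eq_add_neg, ← neg_smul]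
  rw [integral_div, integral_add ((hg.comp_add_left x).comp_smul (by norm_num))
    ((hg.comp_add_left x).comp_smul (by norm_num)), integral_comp_add_smul (fun z => ‖f z‖ ^ 2),
    integral_comp_add_smul (fun z => ‖f z‖ ^ 2)]
  simp [abs_of_pos]

lemma continuous_wig_phasePoint (hf : MemLp f 2 volume) (hb : ℝ) (x : CS n) :
    Continuous fun p => Wig n hb f (phasePoint x p) := by
  simp only [wig_phasePoint]
  refine .const_smul (continuous_of_dominated (fun p => ?_)
    (fun p => .of_forall (norm_wigIntegrand_le hb f x p)) (integrable_wigMajorant hf x)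
    (.of_forall fun y => by unfold wigIntegrand; fun_prop)) ((2 * π * hb) ^ n)⁻¹
  have hm : ∀ c : ℝ, c ≠ 0 → AEStronglyMeasurable (fun y => f (x + c • y)) volume := fun c hc =>
    hf.1.comp_quasiMeasurePreserving (quasiMeasurePreserving_add_smul x hc)
  unfold wigIntegrand
  simp only [sub_eq_add_neg, ← neg_smul]
  exact ((hm _ (by norm_num)).mul (Complex.continuous_conj.comp_aestronglyMeasurable
    (hm _ (by norm_num)))).mul (Continuous.aestronglyMeasurable (by fun_prop))

lemma norm_wig_phasePoint_le (hf : MemLp f 2 volume) {hb : ℝ} (hhb : 0 < hb) (x p : CS n) :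
    ‖Wig n hb f (phasePoint x p)‖ ≤ ((π * hb) ^ n)⁻¹ * ∫ z, ‖f z‖ ^ 2 := by
  rw [wig_phasePoint, norm_smul, norm_inv, norm_pow, Real.norm_of_nonneg (by positivity)]
  calc ((2 * π * hb) ^ n)⁻¹ * ‖∫ y, wigIntegrand hb f x p y‖
      ≤ ((2 * π * hb) ^ n)⁻¹ * (2 ^ n * ∫ z, ‖f z‖ ^ 2) := by
        gcongr
        rw [← integral_wigMajorant hf x]
        exact norm_integral_le_of_norm_le (integrable_wigMajorant hf x)
          (.of_forall (norm_wigIntegrand_le hb f x p))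
    _ = ((π * hb) ^ n)⁻¹ * ∫ z, ‖f z‖ ^ 2 := by
        rw [mul_pow, mul_pow, ← mul_assoc]
        field_simp
        ring

lemma DensityOp.integral_norm_sq_f (ρ : DensityOp n) (k : ℕ) : ∫ x, ‖ρ.f k x‖ ^ 2 = 1 := by
  have h := ρ.f_ortho k k
  simp only [if_pos, mul_comm ((starRingEnd ℂ) _), Complex.mul_conj, Complex.normSq_eq_norm_sq] at h
  exact_mod_cast h

lemma continuous_wigMix_phasePoint (ρ : DensityOp n) {hb : ℝ} (hhb : 0 < hb) (x : CS n) :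
    Continuous fun p => WigMix n hb ρ (phasePoint x p) := by
  refine continuous_tsum (u := fun k => ρ.p k * ((π * hb) ^ n)⁻¹)
    (fun k => continuous_const.mul (continuous_wig_phasePoint (ρ.f_L2 k) hb x))
    (ρ.p_sum.summable.mul_right _) (fun k p => ?_)
  rw [norm_mul, Complex.norm_real, Real.norm_of_nonneg (ρ.p_nonneg k)]
  gcongr
  · exact ρ.p_nonneg k
  · simpa [ρ.integral_norm_sq_f k] using norm_wig_phasePoint_le (ρ.f_L2 k) hhb x p

end Wigner

end RSUP

/-- The normalized indicator of the disc of radius `R` in `ℝ²`,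
`F = (πR²)⁻¹ χ_R`, has `Cov(F) = (R²/4) I`; it satisfies the Robertson–Schrödinger
uncertainty principle iff `R ≥ √(2 hb)` and saturates it (`λ_{σ,1}(Cov F) = hb/2`) iff
`R = √(2 hb)`; yet for no `R > 0` is `F` the Wigner distribution of a density matrix. -/
theorem disc_indicator_example
    (hb : ℝ) (hhb : 0 < hb) (R : ℝ) (hR : 0 < R)
    (F : PS 1 → ℝ)
    (hF : F = fun z => (π * R ^ 2)⁻¹ * (if (∑ i, z i ^ 2) ≤ R ^ 2 then 1 else 0)) :
    Cov F = (R ^ 2 / 4) • (1 : Matrix (Fin (2*1)) (Fin (2*1)) ℝ) ∧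
    ((RSmat 1 hb (Cov F)).PosSemidef ↔ Real.sqrt (2 * hb) ≤ R) ∧
    (minSymplEig 1 (Cov F) = hb / 2 ↔ R = Real.sqrt (2 * hb)) ∧
    ¬ ∃ ρ : DensityOp 1, ∀ z, WigMix 1 hb ρ z = (F z : ℂ) := by
  have hCov : Cov F = (R ^ 2 / 4) • (1 : Matrix (Fin (2*1)) (Fin (2*1)) ℝ) :=
    hF ▸ cov_normalized_discIndicator hR
  refine ⟨hCov, ?_, ?_, ?_⟩
  · rw [hCov, posSemidef_RSmat_smul_one_iff hhb.le, Real.sqrt_le_left hR.le]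
    constructor <;> intro h <;> linarith
  · rw [hCov, minSymplEig_smul_one, abs_of_pos (by positivity), eq_comm (a := R),
      Real.sqrt_eq_iff_eq_sq (by positivity) hR.le]
    constructor <;> intro h <;> linarith
  · rintro ⟨ρ, hρ⟩
    have hline := (continuous_wigMix_phasePoint ρ hhb 0).comp
      (continuous_pi fun _ => continuous_id : Continuous fun t : ℝ => fun _ : Fin 1 => t)
    refine not_continuous_mul_indicator_sq_le (c := (π * R ^ 2)⁻¹) (by positivity) hR.le
      ((Complex.continuous_re.comp hline).congr fun t => ?_)
    simp only [Function.comp_apply, hρ, Complex.ofReal_re, hF, sum_sq_phasePoint]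
    simp
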